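/- arXiv:1606.05380 — 2 statements merged into one kernel-verified Lean document; each statement's English description precedes it below -/
import Mathlib

section
/- If a graph Γ' is cospectral with (has the same adjacency-matrix spectrum as) a connected strongly regular graph Γ with parameters (v,k,λ,μ) where 0 < k < v−1, then Γ' is also strongly regular with the same parameters (v,k,λ,μ). -/
section Defs

variable {K V : Type*} [Field K] [AddCommGroup V] [Module K V]

/-- A submodule is totally singular for `Q` if `Q` vanishes on it
(i.e. the corresponding projective subspace is contained in the quadric). -/
def totallySingular (Q : QuadraticForm K V) (W : Submodule K V) : Prop :=
  ∀ v ∈ W, Q v = 0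

/-- The quadric defined by `Q` is non-singular: no nonzero singular vector lies
in the radical of the polar form. -/
def quadricNonsingular (Q : QuadraticForm K V) : Prop :=
  ∀ v : V, v ≠ 0 → Q v = 0 → ∃ w : V, QuadraticMap.polar ⇑Q v w ≠ 0

/-- The quadric of `Q` has projective index `g`: it contains a projective subspace of
dimension `g` and none of larger dimension. -/
def projIndex (Q : QuadraticForm K V) (g : ℕ) : Prop :=
  (∃ W : Submodule K V, totallySingular Q W ∧ Module.finrank K W = g + 1) ∧
  ∀ W : Submodule K V, totallySingular Q W → Module.finrank K W ≤ g + 1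

/-- A generator: a `g`-dimensional projective subspace contained in the quadric. -/
def isGenerator (Q : QuadraticForm K V) (g : ℕ) (W : Submodule K V) : Prop :=
  totallySingular Q W ∧ Module.finrank K W = g + 1

/-- The points of the quadric, as projective points. -/
abbrev QuadricPoint (Q : QuadraticForm K V) :=
  {p : Projectivization K V // Q p.rep = 0}

/-- The point-graph of the quadric: two points are adjacent when the line joining them
is contained in the quadric. -/
def pointGraph (Q : QuadraticForm K V) : SimpleGraph (QuadricPoint Q) where
  Adj p q := p ≠ q ∧ totallySingular Q (p.1.submodule ⊔ q.1.submodule)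
  symm := by
    constructor
    rintro p q ⟨h1, h2⟩
    exact ⟨h1.symm, by rwa [sup_comm]⟩
  loopless := by constructor; rintro p ⟨h1, -⟩; exact h1 rfl

/-- Type (ii) points relative to `α`: points outside `α` lying in an
`(s+1)`-space of the quadric through `α`. -/
def typeII (Q : QuadraticForm K V) (α : Submodule K V) (p : QuadricPoint Q) : Prop :=
  p.1.rep ∉ α ∧ totallySingular Q (α ⊔ p.1.submodule)

/-- Type (iii) points relative to `α`: the remaining points outside `α`. -/
def typeIII (Q : QuadraticForm K V) (α : Submodule K V) (p : QuadricPoint Q) : Prop :=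
  p.1.rep ∉ α ∧ ¬ totallySingular Q (α ⊔ p.1.submodule)

/-- A pair of points, one of type (ii), the other of type (iii). -/
def mixedPair (Q : QuadraticForm K V) (α : Submodule K V) (p q : QuadricPoint Q) : Prop :=
  (typeII Q α p ∧ typeIII Q α q) ∨ (typeII Q α q ∧ typeIII Q α p)

lemma mixedPair_comm (Q : QuadraticForm K V) (α : Submodule K V) (p q : QuadricPoint Q) :
    mixedPair Q α p q ↔ mixedPair Q α q p := by
  unfold mixedPair; exact or_comm

/-- The line joining `p` and `q` is a 2-secant: it meets the quadric in exactly two points. -/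
def secant2 (Q : QuadraticForm K V) (p q : QuadricPoint Q) : Prop :=
  {x : Projectivization K V | x.rep ∈ p.1.submodule ⊔ q.1.submodule ∧ Q x.rep = 0}.ncard = 2

lemma secant2_comm (Q : QuadraticForm K V) (p q : QuadricPoint Q) :
    secant2 Q p q ↔ secant2 Q q p := by
  unfold secant2; rw [sup_comm]

/-- The switched graph `Γ_s`: same as the point-graph, except that a type (ii) point and a
type (iii) point are adjacent iff their joining line is a 2-secant of the quadric. -/
def gammaS (Q : QuadraticForm K V) (α : Submodule K V) : SimpleGraph (QuadricPoint Q) where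
  Adj p q := p ≠ q ∧ (mixedPair Q α p q → secant2 Q p q) ∧
    (¬ mixedPair Q α p q → totallySingular Q (p.1.submodule ⊔ q.1.submodule))
  symm := by
    constructor
    rintro p q ⟨h1, h2, h3⟩
    refine ⟨h1.symm, fun h => (secant2_comm Q p q).mp (h2 ((mixedPair_comm Q α q p).mp h)),
      fun h => ?_⟩
    have := h3 (fun hx => h ((mixedPair_comm Q α p q).mp hx))
    rwa [sup_comm]
  loopless := by constructor; rintro p ⟨h1, -⟩; exact h1 rfl

/-- `v` has exactly half of the vertices of `X` as neighbours. -/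
def halfIn {Ω : Type*} (G : SimpleGraph Ω) (X : Set Ω) (v : Ω) : Prop :=
  2 * (X ∩ G.neighborSet v).ncard = X.ncard

/-- The Godsil–McKay switch of `G` with respect to the part `X`: every vertex outside `X`
having exactly half of `X` as neighbours has its edges to `X` complemented. -/
def gmSwitch {Ω : Type*} (G : SimpleGraph Ω) (X : Set Ω) : SimpleGraph Ω where
  Adj v w :=
    (((v ∈ X ∧ w ∉ X ∧ halfIn G X w) ∨ (w ∈ X ∧ v ∉ X ∧ halfIn G X v)) ∧
        ¬ G.Adj v w ∧ v ≠ w) ∨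
    (¬ ((v ∈ X ∧ w ∉ X ∧ halfIn G X w) ∨ (w ∈ X ∧ v ∉ X ∧ halfIn G X v)) ∧ G.Adj v w)
  symm := by
    constructor
    rintro v w (⟨h1, h2, h3⟩ | ⟨h1, h2⟩)
    · exact Or.inl ⟨h1.symm, fun h => h2 h.symm, h3.symm⟩
    · exact Or.inr ⟨fun h => h1 h.symm, h2.symm⟩
  loopless := by
    constructor
    rintro v (⟨h1, h2, h3⟩ | ⟨h1, h2⟩)
    · exact h3 rfl
    · exact G.loopless.irrefl v h2

noncomputable instance {K V : Type*} [Field K] [AddCommGroup V] [Module K V] [Finite V]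
    (Q : QuadraticForm K V) : Fintype (QuadricPoint Q) := by
  have : Finite (Projectivization K V) := Quotient.finite _
  exact Fintype.ofFinite _

end Defs

/-!
The adjacency matrix `A` of an `srg(v, k, λ, μ)` satisfies `q(A) = μJ` for
`q(x) = x² + (μ - λ)x + (μ - k)`, hence `(A - k) q(A) = 0`, and `q ≥ 0` on the spectrum of `A`
because `q(k) = μv`. A graph cospectral with a `k`-regular graph is `k`-regular: its adjacency
matrix `B` has eigenvalues `≤ k` (Gershgorin for `A`), so `kI - B ⪰ 0`, while
`tr B² = tr A² = vk` gives `𝟙ᵀ(kI - B)𝟙 = 0`, hence `B𝟙 = k𝟙`. Now `q(B) ⪰ 0` has the eigenvector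
`𝟙` for the eigenvalue `q(k) = μv = tr q(A) = tr q(B)`, which leaves no room for other nonzero
eigenvalues: `q(B) = μJ`, and this matrix equation recovers all the parameters.
-/

open Polynomial
open scoped MatrixOrder

theorem spectrum.eval_eq_zero_of_aeval_eq_zero {K R : Type*} [Field K] [Ring R] [Algebra K R]
    {a : R} {p : K[X]} (hp : aeval a p = 0) {θ : K} (hθ : θ ∈ spectrum K a) : p.eval θ = 0 := by
  have := spectrum.subset_polynomial_aeval a p ⟨θ, hθ, rfl⟩
  rw [hp] at this
  cases subsingleton_or_nontrivial R
  · simp [spectrum.of_subsingleton] at hθ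
  · simpa using this

namespace Matrix

variable {n : Type*} [Fintype n] [DecidableEq n]

theorem spectrum_eq_of_charpoly_eq {K : Type*} [Field K] {A B : Matrix n n K}
    (h : A.charpoly = B.charpoly) : spectrum K A = spectrum K B :=
  Set.ext fun θ => by rw [mem_spectrum_iff_isRoot_charpoly, mem_spectrum_iff_isRoot_charpoly, h]

theorem aeval_mulVec_of_mulVec_eq_smul {R : Type*} [CommRing R] {M : Matrix n n R}
    {x : n → R} {θ : R} (p : R[X]) (h : M *ᵥ x = θ • x) : aeval M p *ᵥ x = p.eval θ • x := by
  have := Module.End.aeval_apply_of_mem_apply_eq_smul (f := toLinAlgEquiv' M) (p := p) h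
  rw [aeval_algEquiv, AlgHom.comp_apply] at this
  exact this

theorem trace_aeval_eq_of_charpoly_eq {A B : Matrix n n ℝ} (hA : A.IsHermitian)
    (hB : B.IsHermitian) (h : A.charpoly = B.charpoly) (f : ℝ[X]) :
    (aeval A f).trace = (aeval B f).trace := by
  cases isEmpty_or_nonempty n
  · simp [trace]
  rw [← cfc_polynomial f A hA.isSelfAdjoint, ← cfc_polynomial f B hB.isSelfAdjoint,
    trace_eq_neg_charpoly_coeff, trace_eq_neg_charpoly_coeff, hA.charpoly_cfc_eq,
    hB.charpoly_cfc_eq, (hA.eigenvalues_eq_eigenvalues_iff hB).2 h]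

theorem IsHermitian.posSemidef_aeval {A : Matrix n n ℝ} (hA : A.IsHermitian) (f : ℝ[X])
    (h : ∀ θ ∈ spectrum ℝ A, 0 ≤ f.eval θ) : (aeval A f).PosSemidef := by
  rw [← cfc_polynomial f A hA.isSelfAdjoint]
  exact nonneg_iff_posSemidef.mp (cfc_nonneg h)

theorem PosSemidef.sub_smul_vecMulVec {N : Matrix n n ℝ} (hN : N.PosSemidef) {u : n → ℝ}
    {r : ℝ} (hu : N *ᵥ u = r • u) :
    (N - (r / (u ⬝ᵥ u)) • vecMulVec u u).PosSemidef := by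
  by_cases hu0 : u ⬝ᵥ u = 0
  · simpa [hu0] using hN
  set s := (u ⬝ᵥ u)⁻¹
  set Q := vecMulVec u u
  have hNQ : N * Q = r • Q := by rw [mul_vecMulVec, hu, smul_vecMulVec]
  have hQN : Q * N = r • Q := by
    have hNt : Nᵀ = N := by rw [← conjTranspose_eq_transpose_of_trivial, hN.isHermitian.eq]
    rw [vecMulVec_mul, ← mulVec_transpose, hNt, hu, vecMulVec_smul]
  have hQQ : Q * Q = (u ⬝ᵥ u) • Q := by rw [vecMulVec_mul_vecMulVec, vecMulVec_smul]
  -- `1 - s • Q` is the orthogonal projection onto `u⊥`, which commutes with `N`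
  have hcompress : (1 - s • Q)ᴴ * N * (1 - s • Q) = N - (r / (u ⬝ᵥ u)) • Q := by
    have hQh : Qᴴ = Q := by simp [Q]
    simp only [conjTranspose_sub, conjTranspose_one, conjTranspose_smul, hQh, star_trivial,
      Matrix.sub_mul, Matrix.mul_sub, Matrix.one_mul, Matrix.mul_one, Matrix.smul_mul,
      Matrix.mul_smul, hNQ, hQN, hQQ, smul_smul]
    rw [show s * r * (u ⬝ᵥ u) = r by simp only [s]; field_simp, sub_self, smul_zero, sub_zero,
      div_eq_inv_mul]
  exact hcompress ▸ hN.conjTranspose_mul_mul_same _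

theorem PosSemidef.eq_smul_vecMulVec_of_trace_eq {N : Matrix n n ℝ} (hN : N.PosSemidef)
    {u : n → ℝ} (hu0 : u ≠ 0) {r : ℝ} (hu : N *ᵥ u = r • u) (htr : N.trace = r) :
    N = (r / (u ⬝ᵥ u)) • vecMulVec u u := by
  have huu : u ⬝ᵥ u ≠ 0 := mt dotProduct_self_eq_zero.1 hu0
  refine sub_eq_zero.1 ((hN.sub_smul_vecMulVec hu).trace_eq_zero_iff.1 ?_)
  rw [trace_sub, trace_smul, trace_vecMulVec, htr, smul_eq_mul, div_mul_cancel₀ _ huu, sub_self]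

end Matrix

namespace SimpleGraph

open Matrix

variable {V : Type*} [Fintype V] {G G' : SimpleGraph V} [DecidableRel G.Adj] [DecidableRel G'.Adj]
  {n k ℓ μ : ℕ}

theorem IsRegularOfDegree.adjMatrix_mul_of_one {α : Type*} [NonAssocSemiring α]
    (h : G.IsRegularOfDegree k) : G.adjMatrix α * of 1 = (k : α) • of 1 := by
  ext v w
  simp [adjMatrix_mul_apply, h v]

theorem IsRegularOfDegree.adjMatrix_mulVec_one {α : Type*} [NonAssocSemiring α]
    (h : G.IsRegularOfDegree k) : G.adjMatrix α *ᵥ 1 = (k : α) • 1 := by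
  ext v
  simp [adjMatrix_mulVec_apply, h v]

noncomputable def srgPoly (k ℓ μ : ℕ) : ℝ[X] := X ^ 2 + C ((μ : ℝ) - ℓ) * X + C ((μ : ℝ) - k)

theorem aeval_srgPoly {ι : Type*} [Fintype ι] [DecidableEq ι] (k ℓ μ : ℕ) (M : Matrix ι ι ℝ) :
    aeval M (srgPoly k ℓ μ) = M ^ 2 + ((μ : ℝ) - ℓ) • M + ((μ : ℝ) - k) • 1 := by
  simp [srgPoly, Algebra.smul_def]

theorem IsSRGWith.lt_of_pos [Nonempty V] (h : G.IsSRGWith n k ℓ μ) (hk : 0 < k) : ℓ < k := by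
  obtain ⟨v⟩ := ‹Nonempty V›
  obtain ⟨w, hvw⟩ := (G.degree_pos_iff_exists_adj v).mp (h.regular v ▸ hk)
  simpa [h.regular v, h.of_adj v w hvw] using hvw.card_commonNeighbors_lt_degree

theorem IsSRGWith.eval_srgPoly_degree (h : G.IsSRGWith n k ℓ μ) (hℓ : ℓ < k) (hkn : k < n) :
    (srgPoly k ℓ μ).eval (k : ℝ) = μ * n := by
  have hparam : (k : ℝ) * (k - ℓ - 1) = (n - k - 1) * μ := by
    have := congrArg (Nat.cast : ℕ → ℝ) (IsSRGWith.param_eq G h (by omega))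
    push_cast [Nat.sub_sub, Nat.cast_sub (show ℓ + 1 ≤ k by omega),
      Nat.cast_sub (show k + 1 ≤ n by omega)] at this
    linear_combination this
  simp only [srgPoly, eval_add, eval_mul, eval_pow, eval_C, eval_X]
  linear_combination hparam

variable [DecidableEq V]

theorem trace_adjMatrix_sq {α : Type*} [Semiring α] :
    (G.adjMatrix α ^ 2).trace = ∑ v, (G.degree v : α) := by
  simp only [trace, diag, sq, adjMatrix_mul_self_apply_self]

theorem IsRegularOfDegree.le_of_mem_spectrum (h : G.IsRegularOfDegree k) {θ : ℝ}
    (hθ : θ ∈ spectrum ℝ (G.adjMatrix ℝ)) : θ ≤ k := by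
  rw [← spectrum_toLin', ← Module.End.hasEigenvalue_iff_mem_spectrum] at hθ
  obtain ⟨v, hv⟩ := eigenvalue_mem_ball hθ
  have hradius : ∑ w ∈ Finset.univ.erase v, ‖G.adjMatrix ℝ v w‖ = k := by
    rw [Finset.sum_erase _ (by simp)]
    simp [adjMatrix_apply, apply_ite, ← h v, degree, neighborFinset_eq_filter]
  rw [hradius, Metric.mem_closedBall, Real.dist_eq] at hv
  simpa using (abs_le.1 hv).2

theorem isRegularOfDegree_of_posSemidef
    (hpsd : ((k : ℝ) • (1 : Matrix V V ℝ) - G.adjMatrix ℝ).PosSemidef)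
    (hsum : ∑ v, (G.degree v : ℝ) = k * Fintype.card V) : G.IsRegularOfDegree k := by
  set M : Matrix V V ℝ := (k : ℝ) • 1 - G.adjMatrix ℝ
  have hmulVec : M *ᵥ 1 = fun v => (k : ℝ) - G.degree v := by
    ext v
    simp [M, sub_mulVec, smul_mulVec, adjMatrix_mulVec_apply]
  have hzero : star 1 ⬝ᵥ M *ᵥ 1 = 0 := by
    simp [hmulVec, dotProduct, hsum, mul_comm]
  intro v
  have := congr_fun ((hpsd.dotProduct_mulVec_zero_iff 1).1 hzero) v
  rw [hmulVec] at this
  exact_mod_cast (sub_eq_zero.1 this).symm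

theorem IsRegularOfDegree.of_adjMatrix_charpoly_eq (h : G.IsRegularOfDegree k)
    (hspec : (G.adjMatrix ℝ).charpoly = (G'.adjMatrix ℝ).charpoly) :
    G'.IsRegularOfDegree k := by
  have hA := G.isHermitian_adjMatrix ℝ
  have hB := G'.isHermitian_adjMatrix ℝ
  refine isRegularOfDegree_of_posSemidef ?_ ?_
  · have := hB.posSemidef_aeval (C (k : ℝ) - X) fun θ hθ => by
      simpa using h.le_of_mem_spectrum (spectrum_eq_of_charpoly_eq hspec ▸ hθ)
    rwa [map_sub, aeval_C, aeval_X, Algebra.algebraMap_eq_smul_one] at this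
  · have := trace_aeval_eq_of_charpoly_eq hA hB hspec (X ^ 2)
    simp only [map_pow, aeval_X, trace_adjMatrix_sq] at this
    simp [← this, h _, mul_comm]

theorem IsRegularOfDegree.aeval_adjMatrix_eq_smul_of_one [Nonempty V] (h : G.IsRegularOfDegree k)
    {f : ℝ[X]} (hf : (aeval (G.adjMatrix ℝ) f).PosSemidef)
    (htr : (aeval (G.adjMatrix ℝ) f).trace = f.eval (k : ℝ)) :
    aeval (G.adjMatrix ℝ) f = (f.eval (k : ℝ) / Fintype.card V) • of 1 := by
  rw [hf.eq_smul_vecMulVec_of_trace_eq one_ne_zero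
    (aeval_mulVec_of_mulVec_eq_smul f h.adjMatrix_mulVec_one) htr, one_dotProduct_one]
  congr 1
  ext
  simp

theorem adjMatrix_sq_apply {α : Type*} [Semiring α] (v w : V) :
    (G.adjMatrix α ^ 2) v w = Fintype.card (G.commonNeighbors v w) := by
  rw [adjMatrix_pow_apply_eq_card_walk,
    @Fintype.card_congr _ _ (G.fintypeSetWalkLength v w 2) _
      (G.walkLengthTwoEquivCommonNeighbors v w)]

theorem isSRGWith_iff_aeval_srgPoly :
    G.IsSRGWith n k ℓ μ ↔
      Fintype.card V = n ∧ aeval (G.adjMatrix ℝ) (srgPoly k ℓ μ) = (μ : ℝ) • of 1 := by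
  have hdiag (v : V) : (G.adjMatrix ℝ ^ 2) v v = G.degree v := by
    rw [sq, adjMatrix_mul_self_apply_self]
  rw [aeval_srgPoly]
  constructor
  · intro h
    refine ⟨h.card, ext fun v w => ?_⟩
    obtain rfl | hvw := eq_or_ne v w
    · simp [hdiag, h.regular v]
    by_cases hadj : G.Adj v w
    · simp [adjMatrix_sq_apply, hvw, hadj, h.of_adj v w hadj]
    · simp [adjMatrix_sq_apply, hvw, hadj, h.of_not_adj hvw hadj]
  · rintro ⟨hcard, h⟩
    have hentry (v w : V) := congr_fun₂ h v w
    refine ⟨hcard, fun v => ?_, fun v w hadj => ?_, fun v w hvw hadj => ?_⟩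
    · have := hentry v v
      simp only [Matrix.add_apply, Matrix.smul_apply, hdiag, adjMatrix_apply,
        G.loopless.irrefl v, if_false, one_apply_eq, of_apply, Pi.one_apply, smul_eq_mul] at this
      exact_mod_cast (by linarith : (G.degree v : ℝ) = k)
    · have := hentry v w
      simp only [Matrix.add_apply, Matrix.smul_apply, adjMatrix_sq_apply, adjMatrix_apply, hadj,
        if_true, one_apply_ne hadj.ne, of_apply, Pi.one_apply, smul_eq_mul] at this
      exact_mod_cast (by linarith : (Fintype.card (G.commonNeighbors v w) : ℝ) = ℓ)
    · have := hentry v w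
      simp only [Matrix.add_apply, Matrix.smul_apply, adjMatrix_sq_apply, adjMatrix_apply, hadj,
        if_false, one_apply_ne hvw, of_apply, Pi.one_apply, smul_eq_mul] at this
      exact_mod_cast (by linarith : (Fintype.card (G.commonNeighbors v w) : ℝ) = μ)

theorem IsSRGWith.aeval_mul_srgPoly_eq_zero (h : G.IsSRGWith n k ℓ μ) :
    aeval (G.adjMatrix ℝ) ((X - C (k : ℝ)) * srgPoly k ℓ μ) = 0 := by
  rw [map_mul, (isSRGWith_iff_aeval_srgPoly.1 h).2, map_sub, aeval_X, aeval_C,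
    Algebra.algebraMap_eq_smul_one, sub_mul, Matrix.mul_smul, h.regular.adjMatrix_mul_of_one,
    smul_mul_assoc, Matrix.one_mul, smul_comm, sub_self]

theorem IsSRGWith.eval_srgPoly_nonneg_of_mem_spectrum (h : G.IsSRGWith n k ℓ μ)
    (hk : 0 ≤ (srgPoly k ℓ μ).eval (k : ℝ)) {θ : ℝ} (hθ : θ ∈ spectrum ℝ (G.adjMatrix ℝ)) :
    0 ≤ (srgPoly k ℓ μ).eval θ := by
  have := spectrum.eval_eq_zero_of_aeval_eq_zero h.aeval_mul_srgPoly_eq_zero hθ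
  rw [eval_mul, eval_sub, eval_X, eval_C, mul_eq_zero, sub_eq_zero] at this
  obtain rfl | hq := this
  · exact hk
  · exact hq.ge

end SimpleGraph

open scoped Classical in
theorem isSRG_of_cospectral_general {Ω : Type*} [Fintype Ω] (G G' : SimpleGraph Ω)
    (v k l m : ℕ) (hG : G.IsSRGWith v k l m)
    (hk0 : 0 < k) (hk1 : k < v - 1)
    (hspec : (G.adjMatrix ℝ).charpoly = (G'.adjMatrix ℝ).charpoly) :
    G'.IsSRGWith v k l m := by
  have : Nonempty Ω := Fintype.card_pos_iff.mp (by rw [hG.card]; omega)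
  have hqk : (SimpleGraph.srgPoly k l m).eval (k : ℝ) = m * v :=
    hG.eval_srgPoly_degree (hG.lt_of_pos hk0) (by omega)
  have hreg : G'.IsRegularOfDegree k := hG.regular.of_adjMatrix_charpoly_eq hspec
  have hpsd := (G'.isHermitian_adjMatrix ℝ).posSemidef_aeval (SimpleGraph.srgPoly k l m)
    fun θ hθ => hG.eval_srgPoly_nonneg_of_mem_spectrum (by rw [hqk]; positivity)
      (Matrix.spectrum_eq_of_charpoly_eq hspec ▸ hθ)
  have htr : (aeval (G'.adjMatrix ℝ) (SimpleGraph.srgPoly k l m)).trace = m * v := by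
    rw [← Matrix.trace_aeval_eq_of_charpoly_eq (G.isHermitian_adjMatrix ℝ)
      (G'.isHermitian_adjMatrix ℝ) hspec, (SimpleGraph.isSRGWith_iff_aeval_srgPoly.1 hG).2]
    simp [Matrix.trace, hG.card, mul_comm]
  refine SimpleGraph.isSRGWith_iff_aeval_srgPoly.2 ⟨hG.card, ?_⟩
  rw [hreg.aeval_adjMatrix_eq_smul_of_one hpsd (htr.trans hqk.symm), hqk, hG.card,
    mul_div_cancel_right₀ _ (Nat.cast_ne_zero.2 (by omega))]

open scoped Classical in
theorem isSRG_of_cospectral {Ω : Type*} [Fintype Ω] (G G' : SimpleGraph Ω)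
    (v k l m : ℕ) (hG : G.IsSRGWith v k l m) (hconn : G.Connected)
    (hk0 : 0 < k) (hk1 : k < v - 1)
    (hspec : (G.adjMatrix ℝ).charpoly = (G'.adjMatrix ℝ).charpoly) :
    G'.IsSRGWith v k l m :=
  isSRG_of_cospectral_general G G' v k l m hG hk0 hk1 hspec
end

section
/- Let Q be a non-singular quadric in PG(n,2) of projective index g ≥ 1, let α be an s-space in Q with 0 ≤ s < g, and partition the points of Q into types: (i) points of α, (ii) points outside α lying in an (s+1)-space of Q containing α, (iii) all other points. Let Γ be the point-graph of Q, let X be the set of type-(ii) vertices and Y the remaining vertices. Then {X, Y} is a Godsil–McKay partition of Γ, and the resulting switched graph Γ_s is strongly regular with the same parameters as Γ. -/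
/-!
Let `χ` be the indicator vector of `X`, `m = |X|` and `J` the all-ones matrix. The matrix
`E = diag χ - χχᵀ/m` is the orthogonal projection onto the vectors supported on `X` with zero
sum, so `S = I - 2E` (which is `(2/m)J - I` on the `X`-block and `I` elsewhere) is an involution
with `SJ = JS = J`. When `X` induces a regular graph and every vertex outside `X` sees `0`, `m/2`
or `m` vertices of `X`, `SAS` is the adjacency matrix of the switched graph, and conjugating
`A² = kI + λA + μ(J - I - A)` by `S` shows that it is strongly regular with the same parameters.

Over `𝔽₂` the points of the quadric are its nonzero singular vectors, adjacent iff orthogonal for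
the polar form `B`, and the type (ii) points are the singular vectors of `α^⊥` outside `α`. A point
of `α` is adjacent to all of them. For a type (iii) point `p` pick `a ∈ α` with `B(a, p) = 1`:
translation by `a` preserves the type (ii) vectors and swaps those orthogonal and non-orthogonal
to `p`. For a type (ii) point `p`, translation by `p`, and by some `t ∈ α^⊥` with `B(p, t) = 1`
(which exists by non-singularity), shows that exactly `|α^⊥|/4` type (ii) vectors are not
orthogonal to `p`, a number independent of `p`.
-/

section Indicator

variable {Ω : Type*} (X : Set Ω)

lemma indicator_one_mul_self (u : Ω) :
    X.indicator (1 : Ω → ℚ) u * X.indicator 1 u = X.indicator 1 u := by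
  by_cases hu : u ∈ X <;> simp [hu]

lemma inv_ncard_mul_ncard_mul_indicator [Finite Ω] (u : Ω) :
    (X.ncard : ℚ)⁻¹ * X.ncard * X.indicator 1 u = X.indicator 1 u := by
  by_cases hu : u ∈ X
  · have : (X.ncard : ℚ) ≠ 0 := by exact_mod_cast Set.ncard_ne_zero_of_mem hu
    simp [hu, this]
  · simp [hu]

lemma sum_indicator_one [Fintype Ω] : ∑ u, X.indicator (1 : Ω → ℚ) u = X.ncard := by
  classical
  simp [Set.indicator_apply, Finset.sum_boole, Set.ncard_eq_toFinset_card']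

lemma indicator_one_dotProduct_eq [Fintype Ω] {v : Ω → ℚ} {a : ℚ} (hv : ∀ u ∈ X, v u = a) :
    X.indicator 1 ⬝ᵥ v = a * X.ncard := by
  have hpt (u : Ω) : X.indicator 1 u * v u = a * X.indicator 1 u := by
    by_cases hu : u ∈ X <;> simp [hu, hv]
  rw [dotProduct, Finset.sum_congr rfl fun u _ => hpt u, ← Finset.mul_sum, sum_indicator_one]

end Indicator

namespace SimpleGraph

open Matrix

variable {Ω α : Type*} [DecidableEq Ω]

theorem adjMatrix_compl_eq [Ring α] (G : SimpleGraph Ω) [DecidableRel G.Adj] :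
    Gᶜ.adjMatrix α = of 1 - 1 - G.adjMatrix α := by
  ext u w
  by_cases h : u = w
  · subst h; simp
  · by_cases hG : G.Adj u w <;> simp [h, hG, one_apply_ne h]

variable [Fintype Ω]

theorem isSRGWith_of_adjMatrix_sq [Semiring α] [CharZero α] (H : SimpleGraph Ω)
    [DecidableRel H.Adj] {v k l m : ℕ} (hcard : Fintype.card Ω = v)
    (hA : H.adjMatrix α ^ 2 = k • (1 : Matrix Ω Ω α) + l • H.adjMatrix α + m • Hᶜ.adjMatrix α) :
    H.IsSRGWith v k l m := by
  have entry (u w : Ω) : (Fintype.card (H.commonNeighbors u w) : α) =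
      k • (1 : Matrix Ω Ω α) u w + l • H.adjMatrix α u w + m • Hᶜ.adjMatrix α u w := by
    simp only [← Matrix.smul_apply, ← Matrix.add_apply, ← hA, adjMatrix_pow_apply_eq_card_walk,
      Set.coe_ofPred]
    rw [Fintype.card_congr (H.walkLengthTwoEquivCommonNeighbors u w)]
  refine ⟨hcard, fun u => ?_, fun u w huw => ?_, fun u w hne huw => ?_⟩
  · simpa [commonNeighbors, ← card_neighborSet_eq_degree] using entry u u
  · simpa [huw, huw.ne] using entry u w
  · simpa [huw, hne] using entry u w

theorem IsSRGWith.of_adjMatrix_eq_conj [Ring α] [CharZero α] {G H : SimpleGraph Ω}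
    [DecidableRel G.Adj] [DecidableRel H.Adj] {S : Matrix Ω Ω α} (hSS : S * S = 1)
    (hSJ : S * of 1 = of 1) (hJS : of 1 * S = of 1) (hHG : H.adjMatrix α = S * G.adjMatrix α * S)
    {v k l m : ℕ} (hG : G.IsSRGWith v k l m) : H.IsSRGWith v k l m := by
  refine isSRGWith_of_adjMatrix_sq (α := α) H hG.card ?_
  have hG2 := hG.matrix_eq (α := α)
  rw [adjMatrix_compl_eq] at hG2 ⊢
  calc H.adjMatrix α ^ 2 = S * G.adjMatrix α ^ 2 * S := by
        simp only [hHG, sq, Matrix.mul_assoc, ← Matrix.mul_assoc S S, hSS, Matrix.one_mul]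
    _ = _ := by
        simp only [hG2, hHG, Matrix.mul_add, Matrix.add_mul, Matrix.mul_sub, Matrix.sub_mul,
          Matrix.mul_smul, Matrix.smul_mul, Matrix.mul_one, hSS, hJS, hSJ, Matrix.mul_assoc]

end SimpleGraph

section GodsilMcKay

open Matrix

variable {Ω : Type*} [DecidableEq Ω] (X : Set Ω)

noncomputable def gmProj : Matrix Ω Ω ℚ :=
  diagonal (X.indicator 1) - (X.ncard : ℚ)⁻¹ • vecMulVec (X.indicator 1) (X.indicator 1)

noncomputable def gmMatrix : Matrix Ω Ω ℚ := 1 - (2 : ℚ) • gmProj X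

lemma gmProj_apply (u w : Ω) : gmProj X u w =
    X.indicator 1 u * ((1 : Matrix Ω Ω ℚ) u w - (X.ncard : ℚ)⁻¹ * X.indicator 1 w) := by
  by_cases h : u = w
  · subst h
    simp [gmProj, mul_sub, vecMulVec_apply, mul_left_comm _ _ (X.indicator 1 u),
      indicator_one_mul_self]
  · simp [gmProj, h, one_apply_ne h, vecMulVec_apply, mul_left_comm]

lemma transpose_gmMatrix : (gmMatrix X)ᵀ = gmMatrix X := by
  simp [gmMatrix, gmProj, transpose_vecMulVec]

variable [Fintype Ω]

lemma mul_gmProj_apply (M : Matrix Ω Ω ℚ) (u w : Ω) : (M * gmProj X) u w =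
    (M u w - (X.ncard : ℚ)⁻¹ * (M *ᵥ X.indicator 1) u) * X.indicator 1 w := by
  simp only [gmProj, Matrix.mul_sub, Algebra.mul_smul_comm, mul_vecMulVec, Matrix.sub_apply,
    mul_diagonal, Matrix.smul_apply, vecMulVec_apply, smul_eq_mul]
  ring

lemma gmProj_mul_apply (M : Matrix Ω Ω ℚ) (u w : Ω) : (gmProj X * M) u w =
    X.indicator 1 u * (M u w - (X.ncard : ℚ)⁻¹ * (X.indicator 1 ᵥ* M) w) := by
  simp only [gmProj, Matrix.sub_mul, Algebra.smul_mul_assoc, vecMulVec_mul, Matrix.sub_apply,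
    diagonal_mul, Matrix.smul_apply, vecMulVec_apply, smul_eq_mul]
  ring

lemma vecMul_gmProj_apply (v : Ω → ℚ) (w : Ω) : (v ᵥ* gmProj X) w =
    (v w - (X.ncard : ℚ)⁻¹ * (v ⬝ᵥ X.indicator 1)) * X.indicator 1 w := by
  simp only [gmProj, vecMul_sub, vecMul_smul, vecMul_vecMulVec, Pi.sub_apply, vecMul_diagonal,
    Pi.smul_apply, smul_eq_mul]
  ring

lemma gmProj_mul_self : gmProj X * gmProj X = gmProj X := by
  ext u w
  rw [gmProj_mul_apply, vecMul_gmProj_apply,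
    indicator_one_dotProduct_eq X (a := 1) fun u hu => by simp [hu], gmProj_apply]
  linear_combination ((1 : Matrix Ω Ω ℚ) u w - (X.ncard : ℚ)⁻¹ * X.indicator 1 w) *
    indicator_one_mul_self X u - (X.ncard : ℚ)⁻¹ * X.indicator 1 u * indicator_one_mul_self X w
    + (X.ncard : ℚ)⁻¹ * X.indicator 1 u * inv_ncard_mul_ncard_mul_indicator X w

lemma gmProj_mul_of_one : gmProj X * of 1 = 0 := by
  ext u w
  have h1 : X.indicator 1 ᵥ* (of 1 : Matrix Ω Ω ℚ) = fun _ => (X.ncard : ℚ) := by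
    ext w
    exact (indicator_one_dotProduct_eq X (v := 1) fun _ _ => rfl).trans (one_mul _)
  rw [gmProj_mul_apply, h1]
  simp only [of_apply, Pi.one_apply, Matrix.zero_apply]
  linear_combination (-1 : ℚ) * inv_ncard_mul_ncard_mul_indicator X u

lemma of_one_mul_gmProj : of 1 * gmProj X = 0 := by
  ext u w
  have h1 : (of 1 : Matrix Ω Ω ℚ) *ᵥ X.indicator 1 = fun _ => (X.ncard : ℚ) := by
    ext w
    exact (dotProduct_comm _ _).trans
      ((indicator_one_dotProduct_eq X (v := 1) fun _ _ => rfl).trans (one_mul _))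
  rw [mul_gmProj_apply, h1]
  simp only [of_apply, Pi.one_apply, Matrix.zero_apply]
  linear_combination (-1 : ℚ) * inv_ncard_mul_ncard_mul_indicator X w

lemma gmMatrix_mul_self : gmMatrix X * gmMatrix X = 1 := by
  simp only [gmMatrix, Matrix.sub_mul, Matrix.mul_sub, Matrix.one_mul, Matrix.mul_one,
    Matrix.smul_mul, Matrix.mul_smul, gmProj_mul_self]
  module

lemma gmMatrix_mul_of_one : gmMatrix X * of 1 = of 1 := by
  simp only [gmMatrix, Matrix.sub_mul, Matrix.smul_mul, gmProj_mul_of_one, smul_zero, sub_zero,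
    Matrix.one_mul]

lemma of_one_mul_gmMatrix : of 1 * gmMatrix X = of 1 := by
  simp only [gmMatrix, Matrix.mul_sub, Matrix.mul_smul, of_one_mul_gmProj, smul_zero, sub_zero,
    Matrix.mul_one]

lemma gmMatrix_conj_apply (M : Matrix Ω Ω ℚ) (u w : Ω) :
    (gmMatrix X * M * gmMatrix X) u w = M u w - 2 * (gmProj X * M) u w
      - 2 * (M * gmProj X) u w + 4 * (gmProj X * (M * gmProj X)) u w := by
  simp only [gmMatrix, Matrix.sub_mul, Matrix.mul_sub, Matrix.one_mul, Matrix.mul_one,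
    Matrix.smul_mul, Matrix.mul_smul, Matrix.mul_assoc, Matrix.sub_apply, Matrix.smul_apply,
    smul_eq_mul]
  ring

variable {X}

lemma gmMatrix_conj_apply_of_mem_of_notMem (M : Matrix Ω Ω ℚ) (hM : Mᵀ = M) {u w : Ω}
    (hu : u ∈ X) (hw : w ∉ X) : (gmMatrix X * M * gmMatrix X) u w =
      2 * (X.ncard : ℚ)⁻¹ * (M *ᵥ X.indicator 1) w - M u w := by
  rw [gmMatrix_conj_apply, gmProj_mul_apply, gmProj_mul_apply, mul_gmProj_apply,
    ← vecMul_vecMul, vecMul_gmProj_apply, ← mulVec_transpose, hM]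
  simp only [Set.indicator_of_mem hu, Set.indicator_of_notMem hw, Pi.one_apply, one_mul,
    mul_zero, sub_zero, sub_self, add_zero]
  ring

lemma gmMatrix_conj_apply_of_notMem_of_notMem (M : Matrix Ω Ω ℚ) {u w : Ω} (hu : u ∉ X)
    (hw : w ∉ X) : (gmMatrix X * M * gmMatrix X) u w = M u w := by
  rw [gmMatrix_conj_apply, gmProj_mul_apply, gmProj_mul_apply, mul_gmProj_apply]
  simp [hu, hw]

lemma gmMatrix_conj_apply_of_mem_of_mem (M : Matrix Ω Ω ℚ) (hM : Mᵀ = M) {d : ℚ}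
    (hreg : ∀ u ∈ X, (M *ᵥ X.indicator 1) u = d) {u w : Ω} (hu : u ∈ X) (hw : w ∈ X) :
    (gmMatrix X * M * gmMatrix X) u w = M u w := by
  have hvec : X.indicator 1 ᵥ* M = M *ᵥ X.indicator 1 := by rw [← mulVec_transpose, hM]
  have hm : (X.ncard : ℚ)⁻¹ * X.ncard = 1 := by
    simpa [hu] using inv_ncard_mul_ncard_mul_indicator X u
  rw [gmMatrix_conj_apply, gmProj_mul_apply, gmProj_mul_apply, mul_gmProj_apply,
    ← vecMul_vecMul, vecMul_gmProj_apply, hvec, dotProduct_comm,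
    indicator_one_dotProduct_eq X hreg, hreg u hu, hreg w hw]
  simp only [Set.indicator_of_mem hu, Set.indicator_of_mem hw, Pi.one_apply]
  linear_combination (4 * d * (X.ncard : ℚ)⁻¹) * hm

end GodsilMcKay

namespace SimpleGraph

open Matrix

variable {Ω : Type*} (G : SimpleGraph Ω) {X : Set Ω} {u w : Ω}

lemma gmSwitch_adj_of_mem_iff (h : u ∈ X ↔ w ∈ X) : (gmSwitch G X).Adj u w ↔ G.Adj u w := by
  simp only [gmSwitch]
  tauto

lemma gmSwitch_adj_of_halfIn (hu : u ∈ X) (hw : w ∉ X) (hh : halfIn G X w) :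
    (gmSwitch G X).Adj u w ↔ ¬ G.Adj u w := by
  have : u ≠ w := fun h => hw (h ▸ hu)
  simp only [gmSwitch]
  tauto

lemma gmSwitch_adj_of_not_halfIn (hw : w ∉ X) (hh : ¬ halfIn G X w) :
    (gmSwitch G X).Adj u w ↔ G.Adj u w := by
  simp only [gmSwitch]
  tauto

lemma gmSwitch_adjMatrix_apply_of_mem_of_notMem [Finite Ω] [DecidableRel G.Adj]
    [DecidableRel (gmSwitch G X).Adj] (hu : u ∈ X) (hw : w ∉ X)
    (htri : (X ∩ G.neighborSet w).ncard = 0 ∨ halfIn G X w ∨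
      (X ∩ G.neighborSet w).ncard = X.ncard) :
    (gmSwitch G X).adjMatrix ℚ u w =
      2 * (X.ncard : ℚ)⁻¹ * (X ∩ G.neighborSet w).ncard - G.adjMatrix ℚ u w := by
  have hX : X.ncard ≠ 0 := Set.ncard_ne_zero_of_mem hu
  have hXq : (X.ncard : ℚ) ≠ 0 := by exact_mod_cast hX
  rcases htri with hnone | hhalf | hall
  · have hadj : ¬ G.Adj u w := fun h =>
      ((Set.ncard_eq_zero (Set.toFinite _)).mp hnone).subset (Set.mem_inter hu h.symm)
    have hhalf : ¬ halfIn G X w := by rw [halfIn, hnone]; omega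
    simp [gmSwitch_adj_of_not_halfIn G hw hhalf, hadj, hnone]
  · have hcount : 2 * (X.ncard : ℚ)⁻¹ * (X ∩ G.neighborSet w).ncard = 1 := by
      rw [mul_right_comm, ← Nat.cast_ofNat, ← Nat.cast_mul, hhalf, mul_inv_cancel₀ hXq]
    rw [adjMatrix_apply, adjMatrix_apply, hcount,
      if_congr (gmSwitch_adj_of_halfIn G hu hw hhalf) rfl rfl]
    by_cases hadj : G.Adj u w <;> simp [hadj]
  · have hadj : G.Adj u w :=
      ((Set.eq_of_subset_of_ncard_le Set.inter_subset_left hall.ge).symm.subset hu).2.symm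
    have hhalf : ¬ halfIn G X w := by rw [halfIn, hall]; omega
    rw [adjMatrix_apply, adjMatrix_apply, hall, mul_assoc, inv_mul_cancel₀ hXq,
      if_congr (gmSwitch_adj_of_not_halfIn G hw hhalf) rfl rfl]
    norm_num [hadj]

variable [Fintype Ω] [DecidableEq Ω] [DecidableRel G.Adj]

lemma adjMatrix_mulVec_indicator_apply (X : Set Ω) (u : Ω) :
    (G.adjMatrix ℚ *ᵥ X.indicator 1) u = (X ∩ G.neighborSet u).ncard := by
  classical
  rw [adjMatrix_mulVec_apply, Set.ncard_eq_toFinset_card']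
  simp only [Set.indicator_apply, Pi.one_apply, Finset.sum_boole, Set.toFinset_inter,
    Nat.cast_inj]
  congr 1
  ext x
  simp [and_comm]

variable [DecidableRel (gmSwitch G X).Adj]

theorem adjMatrix_gmSwitch (hreg : ∃ d, ∀ u ∈ X, (X ∩ G.neighborSet u).ncard = d)
    (htri : ∀ w ∉ X, (X ∩ G.neighborSet w).ncard = 0 ∨ halfIn G X w ∨
      (X ∩ G.neighborSet w).ncard = X.ncard) :
    (gmSwitch G X).adjMatrix ℚ = gmMatrix X * G.adjMatrix ℚ * gmMatrix X := by
  obtain ⟨d, hd⟩ := hreg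
  have hsymm := transpose_adjMatrix G (α := ℚ)
  have hn := adjMatrix_mulVec_indicator_apply G X
  have mixed {u w : Ω} (hu : u ∈ X) (hw : w ∉ X) : (gmSwitch G X).adjMatrix ℚ u w =
      (gmMatrix X * G.adjMatrix ℚ * gmMatrix X) u w := by
    rw [gmSwitch_adjMatrix_apply_of_mem_of_notMem G hu hw (htri w hw),
      gmMatrix_conj_apply_of_mem_of_notMem _ hsymm hu hw, hn]
  have hconj : (gmMatrix X * G.adjMatrix ℚ * gmMatrix X)ᵀ =
      gmMatrix X * G.adjMatrix ℚ * gmMatrix X := by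
    rw [transpose_mul, transpose_mul, transpose_gmMatrix, hsymm, Matrix.mul_assoc]
  ext u w
  by_cases hu : u ∈ X <;> by_cases hw : w ∈ X
  · rw [gmMatrix_conj_apply_of_mem_of_mem _ hsymm (fun v hv => by rw [hn, hd v hv]) hu hw,
      adjMatrix_apply, adjMatrix_apply,
      if_congr (gmSwitch_adj_of_mem_iff G (iff_of_true hu hw)) rfl rfl]
  · exact mixed hu hw
  · rw [← transpose_adjMatrix (gmSwitch G X), ← hconj, transpose_apply, transpose_apply]
    exact mixed hw hu
  · rw [gmMatrix_conj_apply_of_notMem_of_notMem _ hu hw, adjMatrix_apply, adjMatrix_apply,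
      if_congr (gmSwitch_adj_of_mem_iff G (iff_of_false hu hw)) rfl rfl]

theorem IsSRGWith.gmSwitch {v k l m : ℕ} (hG : G.IsSRGWith v k l m)
    (hreg : ∃ d, ∀ u ∈ X, (X ∩ G.neighborSet u).ncard = d)
    (htri : ∀ w ∉ X, (X ∩ G.neighborSet w).ncard = 0 ∨ halfIn G X w ∨
      (X ∩ G.neighborSet w).ncard = X.ncard) :
    (gmSwitch G X).IsSRGWith v k l m :=
  hG.of_adjMatrix_eq_conj (gmMatrix_mul_self X) (gmMatrix_mul_of_one X) (of_one_mul_gmMatrix X)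
    (adjMatrix_gmSwitch G hreg htri)

end SimpleGraph

namespace LinearMap.BilinForm

variable {K V : Type*} [Field K] [AddCommGroup V] [Module K V] [FiniteDimensional K V]
  {B : LinearMap.BilinForm K V}

theorem orthogonal_orthogonal_eq_sup (hB : B.IsRefl) (W : Submodule K V) :
    B.orthogonal (B.orthogonal W) = W ⊔ B.orthogonal ⊤ := by
  have hR : B.orthogonal ⊤ ≤ B.orthogonal W := orthogonal_le le_top
  refine (Submodule.eq_of_le_of_finrank_le
    (sup_le (le_orthogonal_orthogonal hB) (orthogonal_le le_top)) ?_).symm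
  have hW := finrank_add_finrank_orthogonal hB W
  have hWperp := finrank_add_finrank_orthogonal hB (B.orthogonal W)
  rw [inf_eq_right.mpr hR] at hWperp
  have hsup := Submodule.finrank_sup_add_finrank_inf_eq W (B.orthogonal ⊤)
  have hinf := Submodule.finrank_mono (inf_le_right : W ⊓ B.orthogonal ⊤ ≤ B.orthogonal ⊤)
  omega

end LinearMap.BilinForm

section Quadric

open QuadraticMap

variable {K V : Type*} [Field K] [AddCommGroup V] [Module K V] (Q : QuadraticForm K V)

def polarPerp (W : Submodule K V) : Submodule K V :=
  LinearMap.BilinForm.orthogonal (polarBilin Q) W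

lemma mem_polarPerp {W : Submodule K V} {v : V} :
    v ∈ polarPerp Q W ↔ ∀ w ∈ W, polar Q w v = 0 :=
  Iff.rfl

lemma totallySingular_span_singleton {v : V} (hv : Q v = 0) : totallySingular Q (K ∙ v) := by
  intro x hx
  obtain ⟨c, rfl⟩ := Submodule.mem_span_singleton.mp hx
  rw [QuadraticMap.map_smul, hv, smul_zero]

lemma totallySingular_sup_span_singleton_iff {W : Submodule K V} (hW : totallySingular Q W)
    {v : V} (hv : Q v = 0) : totallySingular Q (W ⊔ K ∙ v) ↔ v ∈ polarPerp Q W := by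
  refine ⟨fun h w hw => ?_, fun h x hx => ?_⟩
  · have := h (w + v) (Submodule.add_mem_sup hw (Submodule.mem_span_singleton_self v))
    rwa [QuadraticMap.map_add (⇑Q), hW w hw, hv, zero_add, zero_add] at this
  · obtain ⟨w, hw, y, hy, rfl⟩ := Submodule.mem_sup.mp hx
    obtain ⟨c, rfl⟩ := Submodule.mem_span_singleton.mp hy
    rw [QuadraticMap.map_add (⇑Q), hW w hw, totallySingular_span_singleton Q hv _
      (Submodule.smul_mem _ c (Submodule.mem_span_singleton_self v)), polar_smul_right,
      (mem_polarPerp Q).mp h w hw, smul_zero, add_zero, add_zero]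

lemma pointGraph_adj_iff {p q : QuadricPoint Q} :
    (pointGraph Q).Adj p q ↔ p ≠ q ∧ polar Q p.1.rep q.1.rep = 0 := by
  change p ≠ q ∧ totallySingular Q _ ↔ _
  rw [Projectivization.submodule_eq, Projectivization.submodule_eq,
    totallySingular_sup_span_singleton_iff Q (totallySingular_span_singleton Q p.2) q.2,
    mem_polarPerp]
  refine and_congr_right fun _ => ⟨fun h => h _ (Submodule.mem_span_singleton_self _), ?_⟩
  rintro h _ hw
  obtain ⟨c, rfl⟩ := Submodule.mem_span_singleton.mp hw
  rw [polar_smul_left, h, smul_zero]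

lemma polar_self_eq_zero {v : V} (hv : Q v = 0) : polar Q v v = 0 := by
  rw [polar_self, hv, smul_zero]

lemma le_polarPerp {W : Submodule K V} (hW : totallySingular Q W) : W ≤ polarPerp Q W :=
  fun a ha => (mem_polarPerp Q).mpr fun b hb => by
    rw [polar, hW _ (add_mem hb ha), hW a ha, hW b hb, sub_zero, sub_zero]

lemma typeII_iff {α : Submodule K V} (hα : totallySingular Q α) {p : QuadricPoint Q} :
    typeII Q α p ↔ p.1.rep ∉ α ∧ p.1.rep ∈ polarPerp Q α := by
  rw [typeII, Projectivization.submodule_eq, totallySingular_sup_span_singleton_iff Q hα p.2]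

lemma typeII_subset_neighborSet {α : Submodule K V} (hα : totallySingular Q α)
    {p : QuadricPoint Q} (hp : p.1.rep ∈ α) :
    {q | typeII Q α q} ⊆ (pointGraph Q).neighborSet p := by
  intro q hq
  obtain ⟨hqα, hqperp⟩ := (typeII_iff Q hα).mp hq
  exact (pointGraph_adj_iff Q).mpr ⟨fun h => hqα (h ▸ hp), hqperp _ hp⟩

lemma inter_neighborSet_pointGraph (X : Set (QuadricPoint Q)) (p : QuadricPoint Q) :
    X ∩ (pointGraph Q).neighborSet p = (X ∩ {q | polar Q p.1.rep q.1.rep = 0}) \ {p} := by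
  ext q
  simp only [Set.mem_inter_iff, SimpleGraph.mem_neighborSet, pointGraph_adj_iff, Set.mem_sdiff,
    Set.mem_ofPred_eq, Set.mem_singleton_iff]
  tauto

theorem exists_polar_ne_zero [FiniteDimensional K V] (hQ : quadricNonsingular Q)
    {α : Submodule K V} (hα : totallySingular Q α) {v : V} (hv : Q v = 0) (hvα : v ∉ α) :
    ∃ t ∈ polarPerp Q α, polar Q v t ≠ 0 := by
  have hrefl : (polarBilin Q).IsRefl := fun x y h => by
    rwa [polarBilin_apply_apply, polar_comm, ← polarBilin_apply_apply]
  -- Otherwise `v ∈ α^⊥⊥ = α + rad`, and the radical part of `v` is a nonzero singular vector.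
  by_contra! h
  have hv' : v ∈ polarPerp Q (polarPerp Q α) := fun t ht => hrefl _ _ (h t ht)
  rw [polarPerp, polarPerp, LinearMap.BilinForm.orthogonal_orthogonal_eq_sup hrefl] at hv'
  obtain ⟨a, ha, r, hr, rfl⟩ := Submodule.mem_sup.mp hv'
  have hrad (w : V) : polar Q w r = 0 := hr w Submodule.mem_top
  have hr0 : r ≠ 0 := by rintro rfl; exact hvα (by simpa using ha)
  have hQr : Q r = 0 := by
    rwa [QuadraticMap.map_add (⇑Q), hα a ha, hrad, zero_add, add_zero] at hv
  obtain ⟨w, hw⟩ := hQ r hr0 hQr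
  exact hw (by rw [polar_comm, hrad])

def typeIIVectors (α : Submodule K V) : Set V :=
  {v | Q v = 0 ∧ v ∉ α ∧ v ∈ polarPerp Q α}

end Quadric

section CharTwo

open QuadraticMap

variable {V : Type*} [AddCommGroup V] [Module (ZMod 2) V]

lemma add_self_eq_zero_of_zmodTwo (x : V) : x + x = 0 := by
  rw [← two_smul (ZMod 2), show (2 : ZMod 2) = 0 from rfl, zero_smul]

lemma eq_one_of_ne_zero_zmodTwo {c : ZMod 2} (hc : c ≠ 0) : c = 1 := by
  revert c; decide

lemma Projectivization.rep_mk_zmodTwo {v : V} (hv : v ≠ 0) :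
    (Projectivization.mk (ZMod 2) v hv).rep = v := by
  obtain ⟨a, ha⟩ := Projectivization.exists_smul_eq_mk_rep (ZMod 2) v hv
  rw [← ha, Units.smul_def, eq_one_of_ne_zero_zmodTwo a.ne_zero, one_smul]

lemma two_mul_ncard_inter_eq_of_swap [Finite V] {S : Set V} {g : V → ZMod 2} {a : V}
    (hS : ∀ v ∈ S, v + a ∈ S) (hg : ∀ v ∈ S, g (v + a) = g v + 1) :
    2 * (S ∩ {v | g v = 0}).ncard = S.ncard := by
  have himage : (· + a) '' (S ∩ {v | g v = 0}) = S \ {v | g v = 0} := by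
    ext w
    refine ⟨?_, fun ⟨hw, hgw⟩ => ⟨w + a, ⟨hS w hw, ?_⟩, ?_⟩⟩
    · rintro ⟨v, ⟨hv, hgv : g v = 0⟩, rfl⟩
      refine ⟨hS v hv, ?_⟩
      simp [hg v hv, hgv]
    · rw [Set.mem_ofPred_eq, hg w hw, eq_one_of_ne_zero_zmodTwo hgw]
      rfl
    · simp only [add_assoc, add_self_eq_zero_of_zmodTwo, add_zero]
  have hcard := Set.ncard_image_of_injective (S ∩ {v | g v = 0}) (add_left_injective a)
  rw [himage] at hcard
  have := Set.ncard_inter_add_ncard_sdiff_eq_ncard S {v | g v = 0}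
  omega

variable (Q : QuadraticForm (ZMod 2) V)

lemma ncard_setOf_rep (P : V → Prop) (hP : ∀ v, P v → v ≠ 0) :
    {p : QuadricPoint Q | P p.1.rep}.ncard = {v | Q v = 0 ∧ P v}.ncard := by
  rw [← Set.ncard_image_of_injective _ (f := fun p : QuadricPoint Q => p.1.rep)
    fun p q h => Subtype.ext (by rw [← p.1.mk_rep, ← q.1.mk_rep]; simp only [h])]
  congr 1
  ext v
  refine ⟨?_, fun ⟨hQv, hPv⟩ => ?_⟩
  · rintro ⟨p, hp, rfl⟩
    exact ⟨p.2, hp⟩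
  · have hv := hP v hPv
    exact ⟨⟨Projectivization.mk (ZMod 2) v hv, by rwa [Projectivization.rep_mk_zmodTwo]⟩,
      by simpa [Projectivization.rep_mk_zmodTwo] using hPv, Projectivization.rep_mk_zmodTwo hv⟩

variable {Q} {α : Submodule (ZMod 2) V}

lemma ncard_typeII_inter (hα : totallySingular Q α) (P : V → Prop) :
    ({q | typeII Q α q} ∩ {q : QuadricPoint Q | P q.1.rep}).ncard =
      (typeIIVectors Q α ∩ {v | P v}).ncard := by
  simp only [Set.inter_def, Set.mem_ofPred_eq, typeII_iff Q hα]
  rw [ncard_setOf_rep Q (fun v => (v ∉ α ∧ v ∈ polarPerp Q α) ∧ P v)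
    fun v hv h0 => hv.1.1 (h0 ▸ α.zero_mem)]
  simp only [typeIIVectors, Set.mem_ofPred_eq, and_assoc]

lemma ncard_setOf_typeII (hα : totallySingular Q α) :
    {q | typeII Q α q}.ncard = (typeIIVectors Q α).ncard := by
  simpa using ncard_typeII_inter hα fun _ => True

variable [Finite V]

lemma two_mul_ncard_typeIIVectors_inter (hα : totallySingular Q α) {p : V}
    (hp : p ∉ polarPerp Q α) :
    2 * (typeIIVectors Q α ∩ {v | polar Q p v = 0}).ncard = (typeIIVectors Q α).ncard := by
  obtain ⟨a, ha, hpa⟩ : ∃ a ∈ α, polar Q a p ≠ 0 := by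
    simpa [mem_polarPerp] using hp
  refine two_mul_ncard_inter_eq_of_swap (a := a)
    (fun v ⟨hQv, hvα, hvperp⟩ => ⟨?_, ?_, ?_⟩) fun v _ => ?_
  · rw [QuadraticMap.map_add (⇑Q), hQv, hα a ha, polar_comm, (mem_polarPerp Q).mp hvperp a ha,
      add_zero, add_zero]
  · exact fun h => hvα (by simpa using sub_mem h ha)
  · exact add_mem hvperp (le_polarPerp Q hα ha)
  · rw [polar_add_right, polar_comm Q p a, eq_one_of_ne_zero_zmodTwo hpa]

lemma four_mul_ncard_typeIIVectors_inter (hQ : quadricNonsingular Q) (hα : totallySingular Q α)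
    {p : V} (hp : p ∈ typeIIVectors Q α) :
    4 * (typeIIVectors Q α ∩ {v | polar Q p v = 0}).ncard + (polarPerp Q α : Set V).ncard =
      4 * (typeIIVectors Q α).ncard := by
  obtain ⟨hQp, hpα, hpperp⟩ := hp
  set P : Set V := (polarPerp Q α : Set V)
  set F : Set V := {v | polar Q p v = 0}
  have hsplit : typeIIVectors Q α \ F = (P \ F) ∩ {v | Q v = 0} := by
    ext v
    simp only [typeIIVectors, Set.mem_sdiff, Set.mem_inter_iff, Set.mem_ofPred_eq, F, P,
      SetLike.mem_coe]
    refine ⟨fun ⟨⟨hQv, _, hv⟩, hpv⟩ => ⟨⟨hv, hpv⟩, hQv⟩,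
      fun ⟨⟨hv, hpv⟩, hQv⟩ => ⟨⟨hQv, ?_, hv⟩, hpv⟩⟩
    exact fun hvα => hpv (by rw [polar_comm]; exact hpperp v hvα)
  have hsingular : 2 * ((P \ F) ∩ {v | Q v = 0}).ncard = (P \ F).ncard := by
    refine two_mul_ncard_inter_eq_of_swap (a := p) (fun v ⟨hv, hpv⟩ => ⟨add_mem hv hpperp, ?_⟩)
      fun v ⟨_, hpv⟩ => ?_
    · simpa [F, polar_add_right, polar_self_eq_zero Q hQp] using hpv
    · rw [QuadraticMap.map_add (⇑Q), hQp, polar_comm, eq_one_of_ne_zero_zmodTwo hpv, add_zero]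
  obtain ⟨t, ht, hpt⟩ := exists_polar_ne_zero Q hQ hα hQp hpα
  have hperp : 2 * (P ∩ F).ncard = P.ncard :=
    two_mul_ncard_inter_eq_of_swap (a := t) (fun v hv => add_mem hv ht) fun v _ => by
      rw [polar_add_right, eq_one_of_ne_zero_zmodTwo hpt]
  have h1 := Set.ncard_inter_add_ncard_sdiff_eq_ncard (typeIIVectors Q α) F
  have h2 := Set.ncard_inter_add_ncard_sdiff_eq_ncard P F
  rw [hsplit] at h1
  omega

lemma halfIn_typeII (hα : totallySingular Q α) {p : QuadricPoint Q}
    (hp : p.1.rep ∉ polarPerp Q α) : halfIn (pointGraph Q) {q | typeII Q α q} p := by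
  have hpX : p ∉ {q | typeII Q α q} ∩ {q | polar Q p.1.rep q.1.rep = 0} :=
    fun h => hp ((typeII_iff Q hα).mp h.1).2
  rw [halfIn, inter_neighborSet_pointGraph, Set.sdiff_singleton_eq_self hpX,
    ncard_typeII_inter hα (fun v => polar Q p.1.rep v = 0), ncard_setOf_typeII hα]
  exact two_mul_ncard_typeIIVectors_inter hα hp

lemma ncard_typeII_inter_neighborSet (hQ : quadricNonsingular Q) (hα : totallySingular Q α)
    {p : QuadricPoint Q} (hp : typeII Q α p) :
    4 * (({q | typeII Q α q} ∩ (pointGraph Q).neighborSet p).ncard + 1) +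
      (polarPerp Q α : Set V).ncard = 4 * {q | typeII Q α q}.ncard := by
  have hpX : p ∈ {q | typeII Q α q} ∩ {q | polar Q p.1.rep q.1.rep = 0} :=
    ⟨hp, polar_self_eq_zero Q p.2⟩
  rw [inter_neighborSet_pointGraph, Set.ncard_sdiff_singleton_add_one hpX,
    ncard_typeII_inter hα (fun v => polar Q p.1.rep v = 0), ncard_setOf_typeII hα]
  exact four_mul_ncard_typeIIVectors_inter hQ hα ⟨p.2, (typeII_iff Q hα).mp hp⟩

end CharTwo

open scoped Classical in
theorem main_GM_partition_and_srg_general (n : ℕ)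
    (Q : QuadraticForm (ZMod 2) (Fin (n + 1) → ZMod 2)) (hQ : quadricNonsingular Q)
    (α : Submodule (ZMod 2) (Fin (n + 1) → ZMod 2)) (hα : totallySingular Q α) :
    (∃ d : ℕ, ∀ p ∈ {p : QuadricPoint Q | typeII Q α p},
      ({p : QuadricPoint Q | typeII Q α p} ∩ (pointGraph Q).neighborSet p).ncard = d) ∧
    (∀ p ∉ {p : QuadricPoint Q | typeII Q α p},
      ({p : QuadricPoint Q | typeII Q α p} ∩ (pointGraph Q).neighborSet p).ncard = 0 ∨
      halfIn (pointGraph Q) {p : QuadricPoint Q | typeII Q α p} p ∨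
      ({p : QuadricPoint Q | typeII Q α p} ∩ (pointGraph Q).neighborSet p).ncard
        = {p : QuadricPoint Q | typeII Q α p}.ncard) ∧
    ∀ v k l m : ℕ, (pointGraph Q).IsSRGWith v k l m →
      (gmSwitch (pointGraph Q) {p : QuadricPoint Q | typeII Q α p}).IsSRGWith v k l m := by
  refine ⟨?regular, ?trichotomy, fun v k l m hG => hG.gmSwitch _ ?regular ?trichotomy⟩
  case regular =>
    refine ⟨(4 * {q | typeII Q α q}.ncard - (polarPerp Q α : Set (Fin (n + 1) → ZMod 2)).ncard)
      / 4 - 1, fun p hp => ?_⟩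
    have := ncard_typeII_inter_neighborSet hQ hα hp
    omega
  case trichotomy =>
    intro p hp
    by_cases hpα : p.1.rep ∈ α
    · rw [Set.inter_eq_left.mpr (typeII_subset_neighborSet Q hα hpα)]
      exact Or.inr (Or.inr rfl)
    · exact Or.inr (Or.inl (halfIn_typeII hα fun h => hp ((typeII_iff Q hα).mpr ⟨hpα, h⟩)))

open scoped Classical in
theorem main_GM_partition_and_srg (n g s : ℕ) (hg : 1 ≤ g) (hs : s < g)
    (Q : QuadraticForm (ZMod 2) (Fin (n + 1) → ZMod 2)) (hQ : quadricNonsingular Q)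
    (hgi : projIndex Q g)
    (α : Submodule (ZMod 2) (Fin (n + 1) → ZMod 2)) (hα : totallySingular Q α)
    (hαd : Module.finrank (ZMod 2) ↥α = s + 1) :
    (∃ d : ℕ, ∀ p ∈ {p : QuadricPoint Q | typeII Q α p},
      ({p : QuadricPoint Q | typeII Q α p} ∩ (pointGraph Q).neighborSet p).ncard = d) ∧
    (∀ p ∉ {p : QuadricPoint Q | typeII Q α p},
      ({p : QuadricPoint Q | typeII Q α p} ∩ (pointGraph Q).neighborSet p).ncard = 0 ∨
      halfIn (pointGraph Q) {p : QuadricPoint Q | typeII Q α p} p ∨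
      ({p : QuadricPoint Q | typeII Q α p} ∩ (pointGraph Q).neighborSet p).ncard
        = {p : QuadricPoint Q | typeII Q α p}.ncard) ∧
    ∀ v k l m : ℕ, (pointGraph Q).IsSRGWith v k l m →
      (gmSwitch (pointGraph Q) {p : QuadricPoint Q | typeII Q α p}).IsSRGWith v k l m :=
  main_GM_partition_and_srg_general n Q hQ α hα
end
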